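/- arXiv:1603.07021 — 3 statements merged into one kernel-verified Lean document; each statement's English description precedes it below -/
import Mathlib

section
/- Let d ≥ 2 and let T_R, T_B be finite nonempty sets in ℝ^d. Then the set P_0(T) ⊆ ℙ¹(ℝ) is closed in the real projective line and is preconnected (connected whenever nonempty). -/
open scoped RealInnerProductSpace

/-- The real projective line `ℙ¹(ℝ)`, carrying the quotient topology from `ℝ² \ {0}`. -/
noncomputable instance : TopologicalSpace (Projectivization ℝ (Fin 2 → ℝ)) :=
  instTopologicalSpaceQuotient (s := projectivizationSetoid ℝ (Fin 2 → ℝ))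

/-- The vector `e(a,b) = (a, b, 0, …, 0) ∈ ℝ^d`. -/
noncomputable def evec (d : ℕ) (a b : ℝ) : EuclideanSpace ℝ (Fin d) :=
  WithLp.toLp 2 (fun i : Fin d => if (i : ℕ) = 0 then a else if (i : ℕ) = 1 then b else 0)

/-- `P_0(T) ⊆ ℙ¹(ℝ)`: the set of directions `u = [a : b]` such that there are
`r ∈ conv(T_R)`, `s ∈ conv(T_B)` and `t ∈ ℝ` with `r − s = t · e(a,b)`,
i.e. the projections of the two convex hulls onto the subspace
`{x : a x₁ + b x₂ = 0}` intersect. -/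
def P0 (d : ℕ) (TR TB : Finset (EuclideanSpace ℝ (Fin d))) :
    Set (Projectivization ℝ (Fin 2 → ℝ)) :=
  {u | ∃ (v : Fin 2 → ℝ) (hv : v ≠ 0), Projectivization.mk ℝ v hv = u ∧
    ∃ r ∈ convexHull ℝ (TR : Set (EuclideanSpace ℝ (Fin d))),
      ∃ s ∈ convexHull ℝ (TB : Set (EuclideanSpace ℝ (Fin d))),
        ∃ t : ℝ, r - s = t • evec d (v 0) (v 1)}

/-! Pulled back along the injective linear map `(a, b) ↦ e(a, b)`, the set
`conv T_R - conv T_B` becomes a convex compact set `K ⊆ ℝ²`, and `P_0(T)` is the set of lines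
through the origin that meet `K`. If `0 ∈ K` every line does. Otherwise these lines are the image
of `K` in `ℙ¹(ℝ)`, hence preconnected, and a nonzero `v` spans one of them exactly when its
normalization lies in the compact set `normalize '' K ∪ -(normalize '' K)`, a closed condition. -/

open scoped Pointwise
open Projectivization Topology

namespace NormedSpace

variable {V : Type*} [NormedAddCommGroup V] [NormedSpace ℝ V] {K : Set V}

theorem continuousOn_normalize : ContinuousOn (normalize : V → V) {0}ᶜ :=
  (continuousOn_id.norm.inv₀ fun _ hx => norm_ne_zero_iff.2 hx).smul continuousOn_id

theorem exists_smul_mem_iff_normalize_mem (h0 : 0 ∉ K) (x : V) :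
    (∃ t : ℝ, t • x ∈ K) ↔ normalize x ∈ normalize '' K ∪ -(normalize '' K) := by
  constructor
  · rintro ⟨t, ht⟩
    rcases lt_trichotomy t 0 with htneg | rfl | htpos
    · refine .inr ⟨t • x, ht, ?_⟩
      rw [normalize_smul_of_neg htneg]
    · exact absurd (zero_smul ℝ x ▸ ht) h0
    · exact .inl ⟨t • x, ht, normalize_smul_of_pos htpos x⟩
  · have hk : ∀ k : V, k = ‖k‖ • normalize k := fun k => (norm_smul_normalize k).symm
    rintro (⟨k, hkK, hkx⟩ | ⟨k, hkK, hkx⟩)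
    · refine ⟨‖k‖ * ‖x‖⁻¹, ?_⟩
      rwa [mul_smul, ← normalize, ← hkx, ← hk]
    · refine ⟨-(‖k‖ * ‖x‖⁻¹), ?_⟩
      rwa [neg_smul, mul_smul, ← normalize, ← neg_eq_iff_eq_neg.2 hkx, smul_neg, neg_neg,
        ← hk]

theorem isClosed_setOf_exists_smul_mem (hK : IsCompact K) (h0 : 0 ∉ K) :
    IsClosed {x : {v : V // v ≠ 0} | ∃ t : ℝ, t • (x : V) ∈ K} := by
  have hS : IsCompact (normalize '' K) :=
    hK.image_of_continuousOn (continuousOn_normalize.mono fun x hx => by rintro rfl; exact h0 hx)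
  have hcont : Continuous fun x : {v : V // v ≠ 0} => normalize (x : V) :=
    continuousOn_normalize.comp_continuous continuous_subtype_val fun x => x.2
  convert (hS.union hS.neg).isClosed.preimage hcont using 1
  ext x
  exact exists_smul_mem_iff_normalize_mem h0 x

end NormedSpace

namespace Projectivization

variable {𝕜 V : Type*} [DivisionRing 𝕜] [AddCommGroup V] [Module 𝕜 V]

def linesMeeting (s : Set V) : Set (Projectivization 𝕜 V) :=
  {u | ∃ t : 𝕜, t • u.rep ∈ s}

theorem mk_mem_linesMeeting {s : Set V} {v : V} (hv : v ≠ 0) :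
    mk 𝕜 v hv ∈ linesMeeting s ↔ ∃ t : 𝕜, t • v ∈ s := by
  obtain ⟨a, ha⟩ := exists_smul_eq_mk_rep 𝕜 v hv
  show (∃ t : 𝕜, t • (mk 𝕜 v hv).rep ∈ s) ↔ _
  rw [← ha]
  constructor
  · rintro ⟨t, ht⟩
    exact ⟨t * a, by rwa [mul_smul, ← Units.smul_def]⟩
  · rintro ⟨t, ht⟩
    exact ⟨t * ↑a⁻¹, by rwa [mul_smul, ← Units.smul_def, inv_smul_smul]⟩

theorem linesMeeting_of_zero_mem {s : Set V} (h0 : (0 : V) ∈ s) :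
    linesMeeting (𝕜 := 𝕜) s = Set.univ :=
  Set.eq_univ_of_forall fun _ => ⟨0, by rwa [zero_smul]⟩

theorem linesMeeting_eq_image_of_zero_notMem {s : Set V} (h0 : (0 : V) ∉ s) :
    linesMeeting s = mk' 𝕜 '' (Subtype.val ⁻¹' s) := by
  ext u
  induction u using Projectivization.ind with | h v hv => ?_
  rw [mk_mem_linesMeeting]
  constructor
  · rintro ⟨t, ht⟩
    have ht0 : t ≠ 0 := by rintro rfl; exact h0 (by rwa [zero_smul] at ht)
    refine ⟨⟨t • v, smul_ne_zero ht0 hv⟩, ht, ?_⟩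
    exact (mk_eq_mk_iff' 𝕜 _ _ _ hv).2 ⟨t, rfl⟩
  · rintro ⟨⟨w, hw⟩, hws, hwv⟩
    obtain ⟨a, ha⟩ := (mk_eq_mk_iff' 𝕜 _ _ hw hv).1 hwv
    exact ⟨a, by rwa [ha]⟩

theorem isQuotientMap_mk' :
    IsQuotientMap
      (mk' ℝ : {v : Fin 2 → ℝ // v ≠ 0} → Projectivization ℝ (Fin 2 → ℝ)) :=
  isQuotientMap_quotient_mk'

theorem isClosed_linesMeeting {K : Set (Fin 2 → ℝ)} (hK : IsCompact K) :
    IsClosed (linesMeeting (𝕜 := ℝ) K) := by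
  by_cases h0 : (0 : Fin 2 → ℝ) ∈ K
  · rw [linesMeeting_of_zero_mem h0]
    exact isClosed_univ
  · rw [← isQuotientMap_mk'.isClosed_preimage]
    convert NormedSpace.isClosed_setOf_exists_smul_mem hK h0 using 1
    ext x
    exact mk_mem_linesMeeting x.2

instance : ConnectedSpace {v : Fin 2 → ℝ // v ≠ 0} :=
  isConnected_iff_connectedSpace.1 <|
    isConnected_compl_singleton_of_one_lt_rank (by simp) 0

instance : ConnectedSpace (Projectivization ℝ (Fin 2 → ℝ)) :=
  isQuotientMap_mk'.surjective.connectedSpace isQuotientMap_mk'.continuous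

theorem isPreconnected_linesMeeting {K : Set (Fin 2 → ℝ)} (hK : Convex ℝ K) :
    IsPreconnected (linesMeeting (𝕜 := ℝ) K) := by
  by_cases h0 : (0 : Fin 2 → ℝ) ∈ K
  · rw [linesMeeting_of_zero_mem h0]
    exact isPreconnected_univ
  · rw [linesMeeting_eq_image_of_zero_notMem h0]
    refine IsPreconnected.image ?_ _ isQuotientMap_mk'.continuous.continuousOn
    exact hK.isPreconnected.preimage_of_isOpenMap Subtype.val_injective
      isOpen_ne.isOpenMap_subtype_val fun v hv => ⟨⟨v, fun h => h0 (h ▸ hv)⟩, rfl⟩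

end Projectivization

noncomputable def evecₗ (d : ℕ) : (Fin 2 → ℝ) →ₗ[ℝ] EuclideanSpace ℝ (Fin d) where
  toFun v := evec d (v 0) (v 1)
  map_add' v w := by
    ext i
    simp only [evec, Pi.add_apply, PiLp.add_apply, PiLp.toLp_apply]
    split_ifs <;> ring
  map_smul' c v := by
    ext i
    simp only [evec, Pi.smul_apply, PiLp.smul_apply, PiLp.toLp_apply, smul_eq_mul, RingHom.id_apply]
    split_ifs <;> ring

theorem evecₗ_injective {d : ℕ} (hd : 2 ≤ d) : Function.Injective (evecₗ d) := by
  refine (injective_iff_map_eq_zero _).2 fun v hv => ?_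
  have h0 := congrArg (· ⟨0, by omega⟩) hv
  have h1 := congrArg (· ⟨1, by omega⟩) hv
  simp [evecₗ, evec] at h0 h1
  ext i
  fin_cases i <;> assumption

theorem P0_eq_linesMeeting (d : ℕ) (TR TB : Finset (EuclideanSpace ℝ (Fin d))) :
    P0 d TR TB = linesMeeting
      (evecₗ d ⁻¹' (convexHull ℝ (TR : Set _) - convexHull ℝ (TB : Set _))) := by
  ext u
  constructor
  · rintro ⟨v, hv, rfl, r, hr, s, hs, t, hrs⟩
    refine (mk_mem_linesMeeting hv).2 ⟨t, ?_⟩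
    rw [Set.mem_preimage, map_smul]
    exact hrs ▸ Set.sub_mem_sub hr hs
  · induction u using Projectivization.ind with | h v hv => ?_
    rintro hu
    obtain ⟨t, r, hr, s, hs, hrs⟩ := (mk_mem_linesMeeting hv).1 hu
    exact ⟨v, hv, rfl, r, hr, s, hs, t, hrs.trans (map_smul _ t v)⟩

theorem stmt_2_general (d : ℕ) (hd : 2 ≤ d) (TR TB : Finset (EuclideanSpace ℝ (Fin d))) :
    IsClosed (P0 d TR TB) ∧ IsPreconnected (P0 d TR TB) := by
  have hconv (T : Finset (EuclideanSpace ℝ (Fin d))) :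
      IsCompact (convexHull ℝ (T : Set (EuclideanSpace ℝ (Fin d)))) :=
    T.finite_toSet.isCompact_convexHull ℝ
  rw [P0_eq_linesMeeting]
  refine ⟨isClosed_linesMeeting ?_, isPreconnected_linesMeeting ?_⟩
  · refine (LinearMap.isClosedEmbedding_of_injective ?_).isCompact_preimage ?_
    · exact LinearMap.ker_eq_bot.2 (evecₗ_injective hd)
    · rw [sub_eq_add_neg]
      exact (hconv TR).add (hconv TB).neg
  · exact ((convex_convexHull ℝ _).sub (convex_convexHull ℝ _)).linear_preimage _

/-- For `d ≥ 2` and finite nonempty `T_R, T_B ⊆ ℝ^d`, the set `P_0(T)` is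
closed in the real projective line and is preconnected. -/
theorem stmt_2 (d : ℕ) (hd : 2 ≤ d) (TR TB : Finset (EuclideanSpace ℝ (Fin d)))
    (hR : TR.Nonempty) (hB : TB.Nonempty) :
    IsClosed (P0 d TR TB) ∧ IsPreconnected (P0 d TR TB) :=
  stmt_2_general d hd TR TB
end

section
/- For every dimension d ≥ 1 there exists a constant c > 0 such that for all integers 1 ≤ n ≤ N there exist finite sets T_R, T_B ⊂ ℝ^d with |T_R| = n and |T_B| = N with the following property: every finite family H of affine hyperplanes in ℝ^d that covers T = T_R ∪ T_B satisfies |H| ≥ c · n · N^{d−1}. -/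
/-!
Write `d = m + 1` and call the last coordinate the height. Put red points `r_j` at height `2j`
and blue caps at height `2j + 1` on the last axis (`j < n' = ⌈n/2⌉`), and for each of the
other `m` axes `e` and each level `k < M = ⌊N/(4d)⌋` two blue pins `e_e + L(3k+4)·e_last` and
`-e_e - L(3k+2)·e_last`, with `L = 2n'`. For every `j` and every choice of levels
`k : Fin m → Fin M`, the red point `r_j` is strictly separable from its cap together with the
pins of levels `k`. Conversely, a hyperplane `⟪w, x⟫ = c` weakly separating this configuration
may be oriented so that `w_last > 0`; it then meets the last axis between `r_j` and its cap,
and adding the constraints of an upper pin of level `k` and a lower pin of level `k'` in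
direction `e` gives `0 ≤ 2c ≤ L w_last (3(k - k') + 2)`, i.e. `k' ≤ k`. So the hyperplane
determines `(j, k)`, and a covering family has at least `n' M^m ≥ n N^m / (2 (8d)^d)` members.
Arbitrary further points pad the two colour classes to sizes `n` and `N`.
-/

open scoped RealInnerProductSpace
open Finset

theorem EuclideanSpace.real_inner_single_right {ι : Type*} [Fintype ι] [DecidableEq ι]
    (w : EuclideanSpace ℝ ι) (i : ι) (a : ℝ) :
    ⟪w, EuclideanSpace.single i a⟫ = a * w i := by
  simp [EuclideanSpace.inner_single_right]

namespace HyperplaneCover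

section General

variable {E : Type*} [NormedAddCommGroup E] [InnerProductSpace ℝ E]

def WeaklySeparates (h : E × ℝ) (VR VB : Finset E) : Prop :=
  ((∀ r ∈ VR, ⟪h.1, r⟫ ≤ h.2) ∧ (∀ b ∈ VB, h.2 ≤ ⟪h.1, b⟫)) ∨
    ((∀ r ∈ VR, h.2 ≤ ⟪h.1, r⟫) ∧ (∀ b ∈ VB, ⟪h.1, b⟫ ≤ h.2))

def StronglySeparable (VR VB : Finset E) : Prop :=
  ∃ (w : E) (a : ℝ), w ≠ 0 ∧ (∀ r ∈ VR, ⟪w, r⟫ < a) ∧ (∀ b ∈ VB, a < ⟪w, b⟫)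

def Covers (H : Finset (E × ℝ)) (TR TB : Finset E) : Prop :=
  ∀ VR ⊆ TR, ∀ VB ⊆ TB, VR.Nonempty → VB.Nonempty → StronglySeparable VR VB →
    ∃ h ∈ H, WeaklySeparates h VR VB

def SeparatesBelow (w : E) (c : ℝ) (VR VB : Finset E) : Prop :=
  (∀ r ∈ VR, ⟪w, r⟫ ≤ c) ∧ (∀ b ∈ VB, c ≤ ⟪w, b⟫)

theorem weaklySeparates_iff {h : E × ℝ} {VR VB : Finset E} :
    WeaklySeparates h VR VB ↔
      SeparatesBelow h.1 h.2 VR VB ∨ SeparatesBelow (-h.1) (-h.2) VR VB := by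
  simp [WeaklySeparates, SeparatesBelow, inner_neg_left]

theorem StronglySeparable.mono {VR VB VR' VB' : Finset E} (h : StronglySeparable VR VB)
    (hR : VR' ⊆ VR) (hB : VB' ⊆ VB) : StronglySeparable VR' VB' :=
  let ⟨w, a, hw, hr, hb⟩ := h
  ⟨w, a, hw, fun r h => hr r (hR h), fun b h => hb b (hB h)⟩

theorem Covers.nonempty {H : Finset (E × ℝ)} {TR TB VR VB : Finset E}
    (hcov : Covers H TR TB) (hR : VR ⊆ TR) (hB : VB ⊆ TB) (hRne : VR.Nonempty)
    (hBne : VB.Nonempty) (hsep : StronglySeparable VR VB) : H.Nonempty :=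
  let ⟨h, hH, _⟩ := hcov VR hR VB hB hRne hBne hsep
  ⟨h, hH⟩

theorem Covers.card_le {ι : Type*} [Fintype ι] {H : Finset (E × ℝ)} {TR TB : Finset E}
    (hcov : Covers H TR TB) (VR VB : ι → Finset E) (hR : ∀ x, VR x ⊆ TR)
    (hB : ∀ x, VB x ⊆ TB) (hRne : ∀ x, (VR x).Nonempty) (hBne : ∀ x, (VB x).Nonempty)
    (hsep : ∀ x, StronglySeparable (VR x) (VB x))
    (hdet : ∀ h ∈ H, ∀ x y, WeaklySeparates h (VR x) (VB x) →
      WeaklySeparates h (VR y) (VB y) → x = y) :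
    Fintype.card ι ≤ H.card := by
  choose f hfH hf using fun x => hcov _ (hR x) _ (hB x) (hRne x) (hBne x) (hsep x)
  refine card_le_card_of_injOn f (fun x _ => hfH x) fun x _ y _ hxy => ?_
  exact hdet _ (hfH x) x y (hf x) (hxy ▸ hf y)

end General

section Construction

variable (m : ℕ)

noncomputable def redPt (j : ℕ) : EuclideanSpace ℝ (Fin (m + 1)) :=
  EuclideanSpace.single (Fin.last m) (2 * j)

noncomputable def capPt (j : ℕ) : EuclideanSpace ℝ (Fin (m + 1)) :=
  EuclideanSpace.single (Fin.last m) (2 * j + 1)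

noncomputable def upperPin (L : ℝ) (e : Fin m) (k : ℕ) : EuclideanSpace ℝ (Fin (m + 1)) :=
  EuclideanSpace.single e.castSucc 1 + EuclideanSpace.single (Fin.last m) (L * (3 * k + 4))

noncomputable def lowerPin (L : ℝ) (e : Fin m) (k : ℕ) : EuclideanSpace ℝ (Fin (m + 1)) :=
  EuclideanSpace.single e.castSucc (-1) +
    EuclideanSpace.single (Fin.last m) (-(L * (3 * k + 2)))

noncomputable def capAndPins (L : ℝ) (j : ℕ) (k : Fin m → ℕ) :
    Finset (EuclideanSpace ℝ (Fin (m + 1))) :=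
  insert (capPt m j) (univ.image (fun e => upperPin m L e (k e)) ∪
    univ.image (fun e => lowerPin m L e (k e)))

variable {m}

theorem forall_mem_capAndPins {L : ℝ} {j : ℕ} {k : Fin m → ℕ}
    {p : EuclideanSpace ℝ (Fin (m + 1)) → Prop} :
    (∀ b ∈ capAndPins m L j k, p b) ↔
      p (capPt m j) ∧ ∀ e, p (upperPin m L e (k e)) ∧ p (lowerPin m L e (k e)) := by
  simp only [capAndPins, forall_mem_insert, forall_mem_union, forall_mem_image, mem_univ,
    forall_const, forall_and]

variable (w : EuclideanSpace ℝ (Fin (m + 1)))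

theorem inner_redPt (j : ℕ) : ⟪w, redPt m j⟫ = 2 * j * w (Fin.last m) :=
  EuclideanSpace.real_inner_single_right ..

theorem inner_capPt (j : ℕ) : ⟪w, capPt m j⟫ = (2 * j + 1) * w (Fin.last m) :=
  EuclideanSpace.real_inner_single_right ..

theorem inner_upperPin (L : ℝ) (e : Fin m) (k : ℕ) :
    ⟪w, upperPin m L e k⟫ = w e.castSucc + L * (3 * k + 4) * w (Fin.last m) := by
  simp [upperPin, inner_add_right, EuclideanSpace.real_inner_single_right]

theorem inner_lowerPin (L : ℝ) (e : Fin m) (k : ℕ) :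
    ⟪w, lowerPin m L e k⟫ = -w e.castSucc - L * (3 * k + 2) * w (Fin.last m) := by
  simp only [lowerPin, inner_add_right, EuclideanSpace.real_inner_single_right, neg_mul, one_mul]
  ring

variable {w}

theorem separatesBelow_iff {c L : ℝ} {j : ℕ} {k : Fin m → ℕ} :
    SeparatesBelow w c {redPt m j} (capAndPins m L j k) ↔
      2 * j * w (Fin.last m) ≤ c ∧ c ≤ (2 * j + 1) * w (Fin.last m) ∧
        ∀ e, c ≤ w e.castSucc + L * (3 * k e + 4) * w (Fin.last m) ∧
          c ≤ -w e.castSucc - L * (3 * k e + 2) * w (Fin.last m) := by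
  simp only [SeparatesBelow, mem_singleton, forall_eq, forall_mem_capAndPins, inner_redPt,
    inner_capPt, inner_upperPin, inner_lowerPin]

theorem stronglySeparable_capAndPins {n : ℕ} {j : ℕ} (hj : j < n) (k : Fin m → ℕ) :
    StronglySeparable {redPt m j} (capAndPins m (2 * n) j k) := by
  refine ⟨WithLp.toLp 2 (Fin.snoc (fun e => -(2 * n * (3 * k e + 3))) 1), 2 * j + 1 / 2, ?_, ?_⟩
  · intro h0
    simpa using congrArg (· (Fin.last m)) h0
  · have hj' : (j : ℝ) + 1 ≤ n := by exact_mod_cast hj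
    simp only [mem_singleton, forall_eq, forall_mem_capAndPins, inner_redPt, inner_capPt,
      inner_upperPin, inner_lowerPin, Fin.snoc_last, Fin.snoc_castSucc]
    refine ⟨by linarith, by linarith, fun e => ⟨by linarith, by linarith⟩⟩

theorem lastCoord_pos_of_separatesBelow {c L : ℝ} {j : ℕ} {k : Fin m → ℕ} (hw : w ≠ 0)
    (h : SeparatesBelow w c {redPt m j} (capAndPins m L j k)) : 0 < w (Fin.last m) := by
  obtain ⟨hred, hcap, hpins⟩ := separatesBelow_iff.1 h
  refine (show 0 ≤ w (Fin.last m) by linarith).lt_of_ne' fun h0 => hw ?_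
  have hc : c = 0 := by rw [h0] at hred hcap; linarith
  ext i
  refine Fin.lastCases h0 (fun e => ?_) i
  have := hpins e
  rw [h0, hc] at this
  simp only [mul_zero, add_zero, sub_zero] at this
  simp only [PiLp.zero_apply]
  linarith

theorem eq_of_separatesBelow {c L : ℝ} {j j' : ℕ} {k k' : Fin m → ℕ} (hL : 0 < L)
    (ht : 0 < w (Fin.last m)) (h : SeparatesBelow w c {redPt m j} (capAndPins m L j k))
    (h' : SeparatesBelow w c {redPt m j'} (capAndPins m L j' k')) : j = j' ∧ k = k' := by
  obtain ⟨hred, hcap, hpins⟩ := separatesBelow_iff.1 h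
  obtain ⟨hred', hcap', hpins'⟩ := separatesBelow_iff.1 h'
  have hc : 0 ≤ c := le_trans (by positivity) hred
  have height_le {i i' : ℕ} (hi : 2 * i * w (Fin.last m) ≤ c)
      (hi' : c ≤ (2 * i' + 1) * w (Fin.last m)) : i ≤ i' := by
    have : (2 * i : ℝ) ≤ 2 * i' + 1 := le_of_mul_le_mul_right (hi.trans hi') ht
    have : 2 * i ≤ 2 * i' + 1 := by exact_mod_cast this
    omega
  have level_le {e : Fin m} {l l' : ℕ}
      (hl : c ≤ w e.castSucc + L * (3 * l + 4) * w (Fin.last m))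
      (hl' : c ≤ -w e.castSucc - L * (3 * l' + 2) * w (Fin.last m)) : l' ≤ l := by
    have : (3 * l' : ℝ) ≤ 3 * l + 2 :=
      le_of_mul_le_mul_left (a := L * w (Fin.last m)) (by linarith) (mul_pos hL ht)
    have : 3 * l' ≤ 3 * l + 2 := by exact_mod_cast this
    omega
  refine ⟨(height_le hred hcap').antisymm (height_le hred' hcap), funext fun e => ?_⟩
  exact (level_le (hpins' e).1 (hpins e).2).antisymm (level_le (hpins e).1 (hpins' e).2)

theorem eq_of_weaklySeparates {h : EuclideanSpace ℝ (Fin (m + 1)) × ℝ} {L : ℝ} {j j' : ℕ}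
    {k k' : Fin m → ℕ} (hw : h.1 ≠ 0) (hL : 0 < L)
    (h₁ : WeaklySeparates h {redPt m j} (capAndPins m L j k))
    (h₂ : WeaklySeparates h {redPt m j'} (capAndPins m L j' k')) : j = j' ∧ k = k' := by
  have hw' : -h.1 ≠ 0 := neg_ne_zero.2 hw
  rw [weaklySeparates_iff] at h₁ h₂
  rcases h₁ with h₁ | h₁ <;> rcases h₂ with h₂ | h₂
  · exact eq_of_separatesBelow hL (lastCoord_pos_of_separatesBelow hw h₁) h₁ h₂
  · have := lastCoord_pos_of_separatesBelow hw h₁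
    have := lastCoord_pos_of_separatesBelow hw' h₂
    simp only [PiLp.neg_apply] at this
    linarith
  · have := lastCoord_pos_of_separatesBelow hw h₂
    have := lastCoord_pos_of_separatesBelow hw' h₁
    simp only [PiLp.neg_apply] at this
    linarith
  · exact eq_of_separatesBelow hL (lastCoord_pos_of_separatesBelow hw' h₁) h₁ h₂

variable (m)

noncomputable def redSet (n : ℕ) : Finset (EuclideanSpace ℝ (Fin (m + 1))) :=
  (range n).image (redPt m)

noncomputable def blueSet (n M : ℕ) : Finset (EuclideanSpace ℝ (Fin (m + 1))) :=
  (range n).image (capPt m) ∪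
    (univ : Finset (Fin m × Fin M)).image (fun p => upperPin m (2 * n) p.1 p.2) ∪
    (univ : Finset (Fin m × Fin M)).image (fun p => lowerPin m (2 * n) p.1 p.2)

variable {m}

theorem card_redSet_le (n : ℕ) : (redSet m n).card ≤ n :=
  card_image_le.trans (card_range n).le

theorem card_blueSet_le (n M : ℕ) : (blueSet m n M).card ≤ n + 2 * (m * M) := by
  have hpins {f : Fin m × Fin M → EuclideanSpace ℝ (Fin (m + 1))} :
      (univ.image f).card ≤ m * M :=
    card_image_le.trans (by simp)
  calc (blueSet m n M).card
      ≤ ((range n).image (capPt m)).card + m * M + m * M :=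
        (card_union_le _ _).trans (add_le_add ((card_union_le _ _).trans
          (add_le_add_right hpins _)) hpins)
    _ ≤ n + 2 * (m * M) := by grind [card_image_le, card_range]

theorem capAndPins_subset_blueSet {n M j : ℕ} (hj : j < n) (k : Fin m → Fin M) :
    capAndPins m (2 * n) j (fun e => k e) ⊆ blueSet m n M := by
  intro b hb
  simp only [capAndPins, mem_insert, mem_union, mem_image, mem_univ, true_and] at hb
  simp only [blueSet, mem_union, mem_image, mem_range, mem_univ, true_and, Prod.exists]
  grind

theorem mul_pow_le_card_of_covers {n M : ℕ} {H : Finset (EuclideanSpace ℝ (Fin (m + 1)) × ℝ)}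
    {TR TB : Finset (EuclideanSpace ℝ (Fin (m + 1)))} (hn : 0 < n) (hW : ∀ h ∈ H, h.1 ≠ 0)
    (hcov : Covers H TR TB) (hR : redSet m n ⊆ TR) (hB : blueSet m n M ⊆ TB) :
    n * M ^ m ≤ H.card := by
  have := hcov.card_le (ι := Fin n × (Fin m → Fin M)) (fun x => {redPt m x.1})
    (fun x => capAndPins m (2 * n) x.1 (fun e => x.2 e))
    (fun x => singleton_subset_iff.2 (hR (mem_image_of_mem _ (mem_range.2 x.1.2))))
    (fun x => (capAndPins_subset_blueSet x.1.2 x.2).trans hB) (fun _ => singleton_nonempty _)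
    (fun _ => insert_nonempty _ _) (fun x => stronglySeparable_capAndPins x.1.2 _)
    fun h hh x y hx hy => by
      obtain ⟨hj, hk⟩ := eq_of_weaklySeparates (hW h hh) (by positivity) hx hy
      exact Prod.ext (Fin.ext hj) (funext fun e => Fin.ext (congrFun hk e))
  simpa [Fintype.card_prod, Fintype.card_fun] using this

theorem one_le_card_of_covers {n M : ℕ} {H : Finset (EuclideanSpace ℝ (Fin (m + 1)) × ℝ)}
    {TR TB : Finset (EuclideanSpace ℝ (Fin (m + 1)))} (hn : 0 < n)
    (hcov : Covers H TR TB) (hR : redSet m n ⊆ TR) (hB : blueSet m n M ⊆ TB) :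
    1 ≤ H.card := by
  refine card_pos.2 (hcov.nonempty (VR := {redPt m 0}) (VB := {capPt m 0}) ?_ ?_
    (singleton_nonempty _) (singleton_nonempty _)
    ((stronglySeparable_capAndPins hn fun _ => 0).mono subset_rfl
      (singleton_subset_iff.2 (mem_insert_self _ _))))
  · exact singleton_subset_iff.2 (hR (mem_image_of_mem _ (mem_range.2 hn)))
  · exact singleton_subset_iff.2
      (hB (mem_union_left _ (mem_union_left _ (mem_image_of_mem _ (mem_range.2 hn)))))

end Construction

theorem mul_pow_le_of_count {m n N K : ℕ} (hnN : n ≤ N) (hK : 1 ≤ K)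
    (hcount : (n + 1) / 2 * (N / (4 * (m + 1))) ^ m ≤ K) :
    n * N ^ m ≤ 2 * (8 * (m + 1)) ^ (m + 1) * K := by
  have hN := Nat.lt_mul_div_succ N (show 0 < 4 * (m + 1) by omega)
  set M := N / (4 * (m + 1))
  rcases Nat.eq_zero_or_pos M with hM | hM
  · rw [hM] at hN
    calc n * N ^ m ≤ N * N ^ m := by gcongr
      _ = N ^ (m + 1) := by ring
      _ ≤ (8 * (m + 1)) ^ (m + 1) := by gcongr; omega
      _ ≤ (8 * (m + 1)) ^ (m + 1) * (2 * K) := Nat.le_mul_of_pos_right _ (by omega)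
      _ = 2 * (8 * (m + 1)) ^ (m + 1) * K := by ring
  · have hN' : N ≤ 8 * (m + 1) * M := by nlinarith
    calc n * N ^ m ≤ (2 * ((n + 1) / 2)) * (8 * (m + 1) * M) ^ m := by gcongr; omega
      _ = 2 * (8 * (m + 1)) ^ m * ((n + 1) / 2 * M ^ m) := by rw [mul_pow]; ring
      _ ≤ 2 * (8 * (m + 1)) ^ (m + 1) * K := by gcongr <;> omega

end HyperplaneCover

open HyperplaneCover

/-- For every `d ≥ 1` there is a constant `c > 0` such that for all
`1 ≤ n ≤ N` there are finite sets `T_R, T_B ⊆ ℝ^d` with `|T_R| = n`, `|T_B| = N` such that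
every finite family `H` of affine hyperplanes (represented by pairs `(w, c)` with `w ≠ 0`)
covering `T = T_R ∪ T_B` — i.e. weakly separating every strongly separable bichromatic
subset of `T` having both colors — satisfies `|H| ≥ c · n · N^{d−1}`. -/
theorem stmt_6 (d : ℕ) (hd : 1 ≤ d) :
    ∃ c : ℝ, 0 < c ∧ ∀ n N : ℕ, 1 ≤ n → n ≤ N →
      ∃ TR TB : Finset (EuclideanSpace ℝ (Fin d)),
        TR.card = n ∧ TB.card = N ∧
        ∀ H : Finset (EuclideanSpace ℝ (Fin d) × ℝ),
          (∀ h ∈ H, h.1 ≠ 0) →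
          (∀ VR ⊆ TR, ∀ VB ⊆ TB, VR.Nonempty → VB.Nonempty →
            (∃ (w : EuclideanSpace ℝ (Fin d)) (a : ℝ), w ≠ 0 ∧
              (∀ r ∈ VR, ⟪w, r⟫ < a) ∧ (∀ b ∈ VB, a < ⟪w, b⟫)) →
            ∃ h ∈ H,
              ((∀ r ∈ VR, ⟪h.1, r⟫ ≤ h.2) ∧ (∀ b ∈ VB, h.2 ≤ ⟪h.1, b⟫)) ∨
              ((∀ r ∈ VR, h.2 ≤ ⟪h.1, r⟫) ∧ (∀ b ∈ VB, ⟪h.1, b⟫ ≤ h.2))) →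
          c * n * (N : ℝ) ^ (d - 1) ≤ (H.card : ℝ) := by
  obtain ⟨m, rfl⟩ : ∃ m, d = m + 1 := ⟨d - 1, by omega⟩
  refine ⟨1 / (2 * (8 * (m + 1)) ^ (m + 1)), by positivity, fun n N hn hnN => ?_⟩
  set n' := (n + 1) / 2
  set M := N / (4 * (m + 1))
  have hn' : 0 < n' := by omega
  have hM : 4 * ((m + 1) * M) ≤ N := by
    rw [← mul_assoc, mul_comm]; exact Nat.div_mul_le_self N _
  obtain ⟨TR, hR, hTR⟩ := Infinite.exists_superset_card_eq (redSet m n') n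
    ((card_redSet_le n').trans (by omega))
  obtain ⟨TB, hB, hTB⟩ := Infinite.exists_superset_card_eq (blueSet m n' M) N
    ((card_blueSet_le n' M).trans
      (by have := Nat.mul_le_mul_right M (Nat.le_add_right m 1); omega))
  refine ⟨TR, TB, hTR, hTB, fun H hW hcov => ?_⟩
  have hcount := mul_pow_le_of_count hnN (one_le_card_of_covers hn' hcov hR hB)
    (mul_pow_le_card_of_covers hn' hW hcov hR hB)
  rw [Nat.add_sub_cancel, mul_assoc, one_div_mul_eq_div, div_le_iff₀ (by positivity)]
  exact_mod_cast (by linarith : n * N ^ m ≤ H.card * (2 * (8 * (m + 1)) ^ (m + 1)))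
end

section
/- Let c₁, …, c_{d+1} be d+1 affinely independent points in ℝ^d, let r₁, …, r_{d+1} ∈ ℝ, and let 1 ≤ k ≤ d. Then the system of equations ⟨ω, c_i⟩ + b₁ = −r_i for i = 1, …, k and ⟨ω, c_i⟩ + b₂ = r_i for i = k+1, …, d+1, together with the constraint ‖ω‖ = 1, has at most two solutions (ω, b₁, b₂) ∈ ℝ^d × ℝ × ℝ. -/
/-!
Subtracting the equations of two solutions `(ω, b₁, b₂)` and `(ω₀, a₁, a₂)`, the linear form
`⟪ω - ω₀, ·⟫` takes one value on `c₁, …, c_k` and another on the remaining points. On an affine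
basis such two-valued linear forms make up a line `ℝ v`, with `v ≠ 0` because both groups of points
are nonempty. So every admissible `ω` lies on the line `ω₀ + ℝ v`, which meets the unit sphere in at
most two points, and `ω` determines `b₁` and `b₂`.
-/

open scoped RealInnerProductSpace

section

variable {ι E : Type*} [NormedAddCommGroup E] [InnerProductSpace ℝ E]

theorem eq_zero_or_eq_of_norm_add_smul_eq {x v : E} (hv : v ≠ 0) {t : ℝ}
    (h : ‖x + t • v‖ = ‖x‖) : t = 0 ∨ t = -(2 * ⟪x, v⟫) / ‖v‖ ^ 2 := by
  have hv2 : ‖v‖ ^ 2 ≠ 0 := by positivity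
  have hsq := congrArg (· ^ 2) h
  simp only [norm_add_sq_real, real_inner_smul_right, norm_smul, mul_pow, Real.norm_eq_abs,
    sq_abs] at hsq
  have hfac : t * (2 * ⟪x, v⟫ + t * ‖v‖ ^ 2) = 0 := by linear_combination hsq
  refine (mul_eq_zero.mp hfac).imp_right fun ht => ?_
  rw [eq_div_iff hv2]
  linarith

namespace AffineBasis

variable (c : AffineBasis ι ℝ E)

theorem eq_zero_of_forall_inner_eq {δ : E} {β : ℝ} (h : ∀ i, ⟪δ, c i⟫ = β) : δ = 0 := by
  obtain ⟨i₀⟩ := c.nonempty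
  refine InnerProductSpace.ext_inner_right_basis (c.basisOf i₀) fun j => ?_
  rw [basisOf_apply, vsub_eq_sub, inner_sub_right, h, h, sub_self, inner_zero_left]

theorem exists_forall_inner_add_eq [FiniteDimensional ℝ E] (w : ι → ℝ) :
    ∃ (v : E) (β : ℝ), ∀ i, ⟪v, c i⟫ + β = w i := by
  obtain ⟨i₀⟩ := c.nonempty
  let φ : E →L[ℝ] ℝ :=
    LinearMap.toContinuousLinearMap ((c.basisOf i₀).constr ℝ fun j => w j - w i₀)
  set v := (InnerProductSpace.toDual ℝ E).symm φ
  have hv (j : {j // j ≠ i₀}) : ⟪v, c j - c i₀⟫ = w j - w i₀ := by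
    rw [InnerProductSpace.toDual_symm_apply, ← vsub_eq_sub, ← basisOf_apply]
    exact (c.basisOf i₀).constr_basis ℝ _ j
  refine ⟨v, w i₀ - ⟪v, c i₀⟫, fun i => ?_⟩
  by_cases hi : i = i₀
  · subst hi; ring
  · have := hv ⟨i, hi⟩
    rw [inner_sub_right] at this
    linarith

theorem exists_ne_zero_forall_inner_eq_ite [FiniteDimensional ℝ E] {p : ι → Prop}
    [DecidablePred p] {i j : ι} (hi : p i) (hj : ¬ p j) :
    ∃ v ≠ (0 : E), ∀ (δ : E) (β₁ β₂ : ℝ),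
      (∀ l, ⟪δ, c l⟫ = if p l then β₁ else β₂) → δ = (β₂ - β₁) • v := by
  obtain ⟨v, β, hv⟩ := c.exists_forall_inner_add_eq fun l => if p l then 0 else 1
  refine ⟨v, ?_, fun δ β₁ β₂ hδ => ?_⟩
  · rintro rfl
    have h₀ := hv i
    have h₁ := hv j
    simp only [hi, hj, if_true, if_false, inner_zero_left] at h₀ h₁
    linarith
  · refine sub_eq_zero.mp (c.eq_zero_of_forall_inner_eq (β := β₁ + (β₂ - β₁) * β) fun l => ?_)
    have := hv l
    rw [inner_sub_left, real_inner_smul_left, hδ l]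
    split_ifs at this ⊢ <;> linear_combination (β₁ - β₂) * this

end AffineBasis

end

/-- Given `d + 1` affinely independent points `c₁, …, c_{d+1}` in
`ℝ^d`, reals `r₁, …, r_{d+1}`, and `1 ≤ k ≤ d`, the system
`⟪ω, cᵢ⟫ + b₁ = −rᵢ` for `i ≤ k`, `⟪ω, cᵢ⟫ + b₂ = rᵢ` for `i > k`, `‖ω‖ = 1`,
has at most two solutions `(ω, b₁, b₂)`. -/
theorem stmt_15 (d k : ℕ) (hk₁ : 1 ≤ k) (hk₂ : k ≤ d)
    (c : Fin (d + 1) → EuclideanSpace ℝ (Fin d)) (hc : AffineIndependent ℝ c)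
    (r : Fin (d + 1) → ℝ) :
    ∃ s₁ s₂ : EuclideanSpace ℝ (Fin d) × ℝ × ℝ,
      {s : EuclideanSpace ℝ (Fin d) × ℝ × ℝ |
        ‖s.1‖ = 1 ∧
        (∀ i : Fin (d + 1), (i : ℕ) < k → ⟪s.1, c i⟫ + s.2.1 = -(r i)) ∧
        (∀ i : Fin (d + 1), k ≤ (i : ℕ) → ⟪s.1, c i⟫ + s.2.2 = r i)} ⊆ {s₁, s₂} := by
  refine (Set.eq_empty_or_nonempty _).elim
    (fun hS => ⟨0, 0, hS.subset.trans (Set.empty_subset _)⟩) ?_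
  rintro ⟨⟨ω₀, a₁, a₂⟩, hω₀, h₀₁, h₀₂⟩
  let cb : AffineBasis (Fin (d + 1)) ℝ (EuclideanSpace ℝ (Fin d)) :=
    ⟨c, hc, hc.affineSpan_eq_top_iff_card_eq_finrank_add_one.mpr (by simp)⟩
  let i₀ : Fin (d + 1) := 0
  let iₖ : Fin (d + 1) := ⟨k, by omega⟩
  have hi₀ : (i₀ : ℕ) < k := by simp [i₀]; omega
  obtain ⟨v, hv, hline⟩ := cb.exists_ne_zero_forall_inner_eq_ite
    (p := fun i => (i : ℕ) < k) hi₀ (j := iₖ) (lt_irrefl k)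
  let sol (ω : EuclideanSpace ℝ (Fin d)) : EuclideanSpace ℝ (Fin d) × ℝ × ℝ :=
    (ω, -r i₀ - ⟪ω, c i₀⟫, r iₖ - ⟪ω, c iₖ⟫)
  refine ⟨sol ω₀, sol (ω₀ + (-(2 * ⟪ω₀, v⟫) / ‖v‖ ^ 2) • v), ?_⟩
  rintro ⟨ω, b₁, b₂⟩ ⟨hω, h₁, h₂⟩
  have hsol : (ω, b₁, b₂) = sol ω := by
    have := h₁ i₀ hi₀
    have := h₂ iₖ le_rfl
    simp only [sol, Prod.mk.injEq, true_and]
    constructor <;> linarith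
  have hδ : ω - ω₀ = ((a₂ - b₂) - (a₁ - b₁)) • v := hline _ _ _ fun i => by
    change ⟪ω - ω₀, c i⟫ = _
    rw [inner_sub_left]
    split_ifs with hi
    · linarith [h₁ i hi, h₀₁ i hi]
    · linarith [h₂ i (not_lt.mp hi), h₀₂ i (not_lt.mp hi)]
  rw [sub_eq_iff_eq_add'] at hδ
  rcases eq_zero_or_eq_of_norm_add_smul_eq hv (hδ ▸ hω.trans hω₀.symm) with ht | ht
  · left
    rw [hsol, hδ, ht, zero_smul, add_zero]
  · right
    rw [hsol, hδ, ht]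
    rfl
end
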